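/- Let R be a commutative ring, and consider A = R[t², t³] ⊆ R[t]. Then the quotient R-module R[t]/A is free of rank 1, generated by the class of t. -/

import Mathlib

/-!
Every polynomial with vanishing coefficient of `t` lies in `R[t², t³]`, because every monomial
`tⁿ` with `n ≠ 1` is a product of `t²` and `t³`; conversely, the polynomials with vanishing
coefficient of `t` form a subalgebra containing `t²` and `t³`. Hence `R[t², t³]` is the kernel
of the coefficient map `p ↦ p₁`, which sends `t` to `1`, so `R[t]/R[t², t³] ≅ R` via `[t] ↦ 1`.
-/

open Polynomial

theorem LinearMap.bijective_smul_mk_ker_of_apply_eq_one {R M : Type*} [CommRing R]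
    [AddCommGroup M] [Module R M] (f : M →ₗ[R] R) {x : M} (hx : f x = 1) :
    Function.Bijective (fun r : R => r • Submodule.Quotient.mk (p := LinearMap.ker f) x) := by
  let e := f.quotKerEquivOfSurjective fun r => ⟨r • x, by simp [hx]⟩
  have he : (fun r : R => r • Submodule.Quotient.mk (p := LinearMap.ker f) x) = e.symm :=
    funext fun r => e.injective <| by
      change f (r • x) = e (e.symm r)
      simp [hx]
  exact he ▸ e.symm.bijective

namespace Polynomial

variable {R : Type*} [CommRing R]

theorem X_pow_mem_adjoin_X_sq_X_cube {n : ℕ} (hn : n ≠ 1) :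
    (X ^ n : R[X]) ∈ Algebra.adjoin R {X ^ 2, X ^ 3} := by
  induction n using Nat.strong_induction_on with
  | _ n ih =>
    match n with
    | 0 => simp
    | 2 => exact Algebra.subset_adjoin (by simp)
    | 3 => exact Algebra.subset_adjoin (by simp)
    | m + 4 =>
      rw [show (X : R[X]) ^ (m + 4) = X ^ 2 * X ^ (m + 2) by ring]
      exact Subalgebra.mul_mem _ (Algebra.subset_adjoin (by simp))
        (ih (m + 2) (by omega) (by omega))

theorem coeff_mul_one (p q : R[X]) :
    (p * q).coeff 1 = p.coeff 0 * q.coeff 1 + p.coeff 1 * q.coeff 0 := by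
  simp [coeff_mul, Finset.Nat.sum_antidiagonal_eq_sum_range_succ_mk, Finset.sum_range_succ]

theorem mem_adjoin_X_sq_X_cube_iff {p : R[X]} :
    p ∈ Algebra.adjoin R {X ^ 2, X ^ 3} ↔ p.coeff 1 = 0 := by
  constructor
  · intro hp
    induction hp using Algebra.adjoin_induction with
    | mem x hx => rcases hx with rfl | rfl <;> simp
    | algebraMap r => simp
    | add x y _ _ hx hy => simp [hx, hy]
    | mul x y _ _ hx hy => simp [coeff_mul_one, hx, hy]
  · intro hp
    rw [p.as_sum_support_C_mul_X_pow]
    refine Subalgebra.sum_mem _ fun n _ => ?_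
    rcases eq_or_ne n 1 with rfl | hn
    · simp [hp]
    · exact Subalgebra.mul_mem _ (Subalgebra.algebraMap_mem _ _) (X_pow_mem_adjoin_X_sq_X_cube hn)

theorem toSubmodule_adjoin_X_sq_X_cube :
    Subalgebra.toSubmodule (Algebra.adjoin R {(X : R[X]) ^ 2, X ^ 3}) =
      LinearMap.ker (lcoeff R 1) :=
  Submodule.ext fun _ => mem_adjoin_X_sq_X_cube_iff

end Polynomial

/-- Let `R` be a commutative ring and `A = R[t²,t³] ⊆ R[t]`.  Then the quotient
`R`-module `R[t]/A` is free of rank one, generated by the class of `t`: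
the map `R → R[t]/A`, `r ↦ r·[t]`, is bijective. -/
theorem quotient_by_cusp_subalgebra_free_rank_one
    (R : Type) [CommRing R] :
    Function.Bijective (fun r : R =>
      r • (Submodule.Quotient.mk (p := Subalgebra.toSubmodule
        (Algebra.adjoin R {Polynomial.X ^ 2, Polynomial.X ^ 3}))
        (Polynomial.X : Polynomial R))) := by
  rw [toSubmodule_adjoin_X_sq_X_cube]
  exact (lcoeff R 1).bijective_smul_mk_ker_of_apply_eq_one coeff_X_one
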